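/- (Closed-form DSO solution, morning.) Under the reduced-network assumptions, the explicit collection (q_i, ρ_i, p_i) defined by q_i(t) = μ̂_i·1_{𝒯_i}(t), ρ_i = s(t_i^-) + c_i, and p_i(t) = ρ_i − s(t) − c_i − Σ_{j=1}^{i−1} p_j(t) for t ∈ 𝒯_i with p_i(t) = 0 otherwise, satisfies p_i(t) ≥ 0 for all i, t, is a pricing equilibrium (satisfies (E1), (E2), (E3)), and the flow pattern (q_i) minimizes the social transport cost Σ_{i=1}^{N} ∫_0^T (s(t)+c_i)·r_i(t) dt over all feasible flow patterns (r_i). -/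

import Mathlib

open MeasureTheory Finset Set
open scoped Classical

noncomputable section

/-- Basic corridor-network primitives: `N ≥ 1` bottlenecks, rush hour `[0,T]`,
capacities `μ`, demands `Q`, free-flow times `c`, and a continuous, strictly
quasi-convex schedule-delay function `s` with minimum `0` at `td ∈ (0,T)`. -/
def CorridorNet (N : ℕ) (T td : ℝ) (μ Q c : ℕ → ℝ) (s : ℝ → ℝ) : Prop :=
  1 ≤ N ∧ 0 < T ∧ td ∈ Set.Ioo (0:ℝ) T ∧
  (∀ i ∈ Finset.Icc 1 N, 0 < μ i ∧ 0 < Q i ∧ 0 ≤ c i) ∧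
  ContinuousOn s (Set.Icc 0 T) ∧ (∀ t ∈ Set.Icc (0:ℝ) T, 0 ≤ s t) ∧ s td = 0 ∧
  (∀ a ∈ Set.Icc (0:ℝ) T, ∀ b ∈ Set.Icc (0:ℝ) T, a ≠ b →
    ∀ l ∈ Set.Ioo (0:ℝ) 1, s (l * a + (1 - l) * b) < max (s a) (s b))

/-- Pricing equilibrium: bounded measurable nonnegative flows `q` and prices `p`
with constants `ρ`, satisfying (E1), (E2), (E3). -/
def IsPricingEq (N : ℕ) (T : ℝ) (μ Q c : ℕ → ℝ) (s : ℝ → ℝ)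
    (q p : ℕ → ℝ → ℝ) (ρ : ℕ → ℝ) : Prop :=
  (∀ i ∈ Finset.Icc 1 N, Measurable (q i) ∧ Measurable (p i)) ∧
  (∀ i ∈ Finset.Icc 1 N, ∃ M : ℝ, ∀ t ∈ Set.Icc (0:ℝ) T, q i t ≤ M ∧ p i t ≤ M) ∧
  (∀ i ∈ Finset.Icc 1 N, ∀ t ∈ Set.Icc (0:ℝ) T, 0 ≤ q i t ∧ 0 ≤ p i t) ∧
  (∀ i ∈ Finset.Icc 1 N, ∀ t ∈ Set.Icc (0:ℝ) T,
    ρ i ≤ s t + c i + ∑ j ∈ Finset.Icc 1 i, p j t ∧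
    (0 < q i t → s t + c i + ∑ j ∈ Finset.Icc 1 i, p j t = ρ i)) ∧
  (∀ i ∈ Finset.Icc 1 N, ∀ t ∈ Set.Icc (0:ℝ) T,
    (∑ j ∈ Finset.Icc i N, q j t) ≤ μ i ∧
    (0 < p i t → (∑ j ∈ Finset.Icc i N, q j t) = μ i)) ∧
  (∀ i ∈ Finset.Icc 1 N, ∫ t in (0:ℝ)..T, q i t = Q i)

/-- `μ̂ i = μ i − μ (i+1)` for `i < N`, and `μ̂ N = μ N`. -/
def muhat (N : ℕ) (μ : ℕ → ℝ) (i : ℕ) : ℝ :=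
  if i < N then μ i - μ (i + 1) else μ N

/-- Reduced-network assumptions: strictly decreasing capacities, strictly
increasing window lengths `T_i = Q_i/μ̂_i`, and windows `𝒯_i = [tm i, tp i] ⊆ (0,T)`
of length `T_i` with `s (tm i) = s (tp i)`. -/
def ReducedNet (N : ℕ) (T : ℝ) (μ Q : ℕ → ℝ) (s : ℝ → ℝ) (tm tp : ℕ → ℝ) : Prop :=
  (∀ i, 1 ≤ i → i < N → μ (i + 1) < μ i) ∧ 0 < μ N ∧
  (∀ i, 1 ≤ i → i < N → Q i / muhat N μ i < Q (i + 1) / muhat N μ (i + 1)) ∧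
  (∀ i ∈ Finset.Icc 1 N, 0 < tm i ∧ tp i < T ∧
    tp i - tm i = Q i / muhat N μ i ∧ s (tm i) = s (tp i))

/-- The explicit DSO collection: `q_i = μ̂_i·1_{𝒯_i}`, `ρ_i = s(t_i^-) + c_i`, and
`p_i(t) = ρ_i − s(t) − c_i − Σ_{j<i} p_j(t)` on `𝒯_i`, `0` otherwise. -/
def ExplicitDSO (N : ℕ) (μ c : ℕ → ℝ) (s : ℝ → ℝ) (tm tp : ℕ → ℝ)
    (q p : ℕ → ℝ → ℝ) (ρ : ℕ → ℝ) : Prop :=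
  (∀ i ∈ Finset.Icc 1 N, ∀ t : ℝ,
    q i t = if t ∈ Set.Icc (tm i) (tp i) then muhat N μ i else 0) ∧
  (∀ i ∈ Finset.Icc 1 N, ρ i = s (tm i) + c i) ∧
  (∀ i ∈ Finset.Icc 1 N, ∀ t : ℝ,
    p i t = if t ∈ Set.Icc (tm i) (tp i)
      then ρ i - s t - c i - ∑ j ∈ Finset.Icc 1 (i - 1), p j t else 0)

/-- A feasible flow pattern: bounded measurable nonnegative flows respecting
the capacity constraints and the demand conservation. -/
def FeasibleFlow (N : ℕ) (T : ℝ) (μ Q : ℕ → ℝ) (r : ℕ → ℝ → ℝ) : Prop :=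
  (∀ i ∈ Finset.Icc 1 N, Measurable (r i)) ∧
  (∀ i ∈ Finset.Icc 1 N, ∃ M : ℝ, ∀ t ∈ Set.Icc (0:ℝ) T, r i t ≤ M) ∧
  (∀ i ∈ Finset.Icc 1 N, ∀ t ∈ Set.Icc (0:ℝ) T, 0 ≤ r i t) ∧
  (∀ i ∈ Finset.Icc 1 N, ∀ t ∈ Set.Icc (0:ℝ) T, (∑ j ∈ Finset.Icc i N, r j t) ≤ μ i) ∧
  (∀ i ∈ Finset.Icc 1 N, ∫ t in (0:ℝ)..T, r i t = Q i)

/-!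
On `[0, T]` strict quasi-convexity makes each window `𝒯_i = [t_i^-, t_i^+]` the sublevel set
`{t | s t ≤ s t_i^-}`. Hence windows are nested according to their lengths `T_i`, the levels
`s t_i^-` increase with `i`, and the cumulative price `∑_{j ≤ i} p_j` equals `(s t_i^- - s)⁺` on
`[0, T]`. This gives `p_i ≥ 0` and (E1); nesting saturates bottleneck `i` on `𝒯_i`, which gives
(E2).

Optimality is weak duality: pointwise in `t`, every feasible `r` satisfies
`∑ (s + c_i) r_i ≥ ∑ ρ_i r_i - ∑ μ_i p_i`, with equality for `q` by complementary slackness, and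
after integration the right-hand side equals `∑ ρ_i Q_i - ∑ μ_i ∫ p_i` for both `r` and `q`.
-/

def StrictlyQuasiconvexOn (K : Set ℝ) (s : ℝ → ℝ) : Prop :=
  ∀ a ∈ K, ∀ b ∈ K, a ≠ b → ∀ l ∈ Set.Ioo (0:ℝ) 1, s (l * a + (1 - l) * b) < max (s a) (s b)

namespace StrictlyQuasiconvexOn

variable {K : Set ℝ} {s : ℝ → ℝ} {a b a' b' t : ℝ}

lemma lt_max (h : StrictlyQuasiconvexOn K s) (ha : a ∈ K) (hb : b ∈ K)
    (hat : a < t) (htb : t < b) : s t < max (s a) (s b) := by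
  have hba : 0 < b - a := by linarith
  have hl : (b - t) / (b - a) ∈ Set.Ioo (0:ℝ) 1 :=
    ⟨div_pos (by linarith) hba, (div_lt_one hba).2 (by linarith)⟩
  have hcomb : (b - t) / (b - a) * a + (1 - (b - t) / (b - a)) * b = t := by
    field_simp
    ring
  simpa only [hcomb] using h a ha b hb (hat.trans htb).ne _ hl

lemma mem_Icc_iff (h : StrictlyQuasiconvexOn K s) (ha : a ∈ K) (hb : b ∈ K) (ht : t ∈ K)
    (hab : a < b) (hsab : s a = s b) : t ∈ Set.Icc a b ↔ s t ≤ s a := by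
  constructor
  · rintro ⟨hat, htb⟩
    rcases hat.eq_or_lt with rfl | hat
    · rfl
    rcases htb.eq_or_lt with rfl | htb
    · exact hsab.ge
    simpa only [← hsab, max_self] using (h.lt_max ha hb hat htb).le
  · intro hst
    by_contra hout
    rw [Set.mem_Icc, not_and_or, not_le, not_le] at hout
    rcases hout with hta | hbt
    · have := h.lt_max ht hb hta hab
      rw [← hsab, max_eq_right hst] at this
      exact this.false
    · have := h.lt_max ha ht hab hbt
      rw [← hsab, max_eq_left hst] at this
      exact this.false

lemma Icc_subset_Icc_of_le [K.OrdConnected] (h : StrictlyQuasiconvexOn K s) (ha : a ∈ K)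
    (hb : b ∈ K) (ha' : a' ∈ K) (hb' : b' ∈ K) (hab : a < b) (hab' : a' < b')
    (hsab : s a = s b) (hsab' : s a' = s b') (hle : s a ≤ s a') :
    Set.Icc a b ⊆ Set.Icc a' b' := fun t ht ↦ by
  have htK : t ∈ K := Set.OrdConnected.out ‹_› ha hb ht
  exact (h.mem_Icc_iff ha' hb' htK hab' hsab').2
    (((h.mem_Icc_iff ha hb htK hab hsab).1 ht).trans hle)

lemma Icc_subset_Icc_of_sub_lt [K.OrdConnected] (h : StrictlyQuasiconvexOn K s) (ha : a ∈ K)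
    (hb : b ∈ K) (ha' : a' ∈ K) (hb' : b' ∈ K) (hab : a < b) (hsab : s a = s b)
    (hsab' : s a' = s b') (hlen : b - a < b' - a') : Set.Icc a b ⊆ Set.Icc a' b' := by
  have hab' : a' < b' := by linarith
  rcases le_total (s a) (s a') with hle | hle
  · exact h.Icc_subset_Icc_of_le ha hb ha' hb' hab hab' hsab hsab' hle
  · have := (Set.Icc_subset_Icc_iff hab'.le).1
      (h.Icc_subset_Icc_of_le ha' hb' ha hb hab' hab hsab' hsab hle)
    linarith

end StrictlyQuasiconvexOn

lemma sum_Icc_muhat {N i : ℕ} (μ : ℕ → ℝ) (hi : i ≤ N) :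
    ∑ j ∈ Finset.Icc i N, muhat N μ j = μ i := by
  induction hi using Nat.decreasingInduction with
  | self => simp [muhat]
  | of_succ k hk ih =>
    rw [Finset.Icc_eq_cons_Ioc hk.le, Finset.sum_cons, ← Finset.Icc_add_one_left_eq_Ioc, ih, muhat,
      if_pos hk]
    ring

lemma sum_Icc_sum_mul_eq_sum_mul_sum_Icc (m N : ℕ) (p x : ℕ → ℝ) :
    ∑ i ∈ Finset.Icc m N, (∑ j ∈ Finset.Icc m i, p j) * x i =
      ∑ j ∈ Finset.Icc m N, p j * ∑ i ∈ Finset.Icc j N, x i := by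
  simp only [Finset.sum_mul, Finset.mul_sum]
  exact Finset.sum_comm' fun i j ↦ by simp only [Finset.mem_Icc]; omega

lemma sub_sum_Icc_one_pred (f : ℕ → ℝ) {i : ℕ} (hi : 1 ≤ i) :
    ∑ j ∈ Finset.Icc 1 i, f j - ∑ j ∈ Finset.Icc 1 (i - 1), f j = f i := by
  obtain ⟨k, rfl⟩ := Nat.exists_eq_add_of_le' hi
  rw [Finset.sum_Icc_succ_top (by omega), Nat.add_sub_cancel, add_sub_cancel_left]

lemma of_pos_of_eq_ite {P : Prop} [Decidable P] {x a : ℝ} (hx : x = if P then a else 0)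
    (hpos : 0 < x) : P := by
  by_contra h
  rw [hx, if_neg h] at hpos
  exact hpos.false

section Lagrangian

variable (N : ℕ) (a ρ μ p x : ℕ → ℝ)

/-- Both sums on the right are nonnegative under dual feasibility and vanish under
complementary slackness. -/
lemma sum_mul_sub_dual_eq :
    ∑ i ∈ Finset.Icc 1 N, a i * x i
        - (∑ i ∈ Finset.Icc 1 N, ρ i * x i - ∑ i ∈ Finset.Icc 1 N, μ i * p i) =
      ∑ i ∈ Finset.Icc 1 N, (a i + ∑ j ∈ Finset.Icc 1 i, p j - ρ i) * x i +
        ∑ j ∈ Finset.Icc 1 N, p j * (μ j - ∑ i ∈ Finset.Icc j N, x i) := by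
  simp only [add_sub_right_comm, add_mul, sub_mul, mul_sub, Finset.sum_add_distrib,
    Finset.sum_sub_distrib, sum_Icc_sum_mul_eq_sum_mul_sum_Icc, mul_comm (p _) (μ _)]
  ring

variable {N a ρ μ p x}

lemma dual_le_sum_mul (hp : ∀ i ∈ Finset.Icc 1 N, 0 ≤ p i) (hx : ∀ i ∈ Finset.Icc 1 N, 0 ≤ x i)
    (hρ : ∀ i ∈ Finset.Icc 1 N, ρ i ≤ a i + ∑ j ∈ Finset.Icc 1 i, p j)
    (hcap : ∀ i ∈ Finset.Icc 1 N, ∑ j ∈ Finset.Icc i N, x j ≤ μ i) :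
    ∑ i ∈ Finset.Icc 1 N, ρ i * x i - ∑ i ∈ Finset.Icc 1 N, μ i * p i ≤
      ∑ i ∈ Finset.Icc 1 N, a i * x i := by
  rw [← sub_nonneg, sum_mul_sub_dual_eq]
  refine add_nonneg (Finset.sum_nonneg fun i hi ↦ ?_) (Finset.sum_nonneg fun j hj ↦ ?_)
  · exact mul_nonneg (by linarith [hρ i hi]) (hx i hi)
  · exact mul_nonneg (hp j hj) (by linarith [hcap j hj])

lemma dual_eq_sum_mul (hp : ∀ i ∈ Finset.Icc 1 N, 0 ≤ p i) (hx : ∀ i ∈ Finset.Icc 1 N, 0 ≤ x i)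
    (hρ : ∀ i ∈ Finset.Icc 1 N, 0 < x i → a i + ∑ j ∈ Finset.Icc 1 i, p j = ρ i)
    (hcap : ∀ i ∈ Finset.Icc 1 N, 0 < p i → ∑ j ∈ Finset.Icc i N, x j = μ i) :
    ∑ i ∈ Finset.Icc 1 N, ρ i * x i - ∑ i ∈ Finset.Icc 1 N, μ i * p i =
      ∑ i ∈ Finset.Icc 1 N, a i * x i := by
  rw [eq_comm, ← sub_eq_zero, sum_mul_sub_dual_eq, Finset.sum_eq_zero fun i hi ↦ ?_,
    Finset.sum_eq_zero fun j hj ↦ ?_, add_zero]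
  · rcases (hp j hj).eq_or_lt with h | h
    · rw [← h, zero_mul]
    · rw [hcap j hj h, sub_self, mul_zero]
  · rcases (hx i hi).eq_or_lt with h | h
    · rw [← h, mul_zero]
    · rw [hρ i hi h, sub_self, zero_mul]

end Lagrangian

lemma intervalIntegrable_of_nonneg_of_le {f : ℝ → ℝ} {a b M : ℝ} (hab : a ≤ b)
    (hf : Measurable f) (h0 : ∀ t ∈ Set.Icc a b, 0 ≤ f t) (hM : ∀ t ∈ Set.Icc a b, f t ≤ M) :
    IntervalIntegrable f volume a b := by
  rw [intervalIntegrable_iff_integrableOn_Icc_of_le hab]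
  refine Measure.integrableOn_of_bounded (M := M) (by simp) hf.aestronglyMeasurable ?_
  refine (ae_restrict_iff' measurableSet_Icc).2 (ae_of_all _ fun t ht ↦ ?_)
  rw [Real.norm_of_nonneg (h0 t ht)]
  exact hM t ht

lemma intervalIntegrable_sum_mul {ι : Type*} (S : Finset ι) {w : ι → ℝ → ℝ} {x : ι → ℝ → ℝ}
    {a b : ℝ} (hw : ∀ i ∈ S, ContinuousOn (w i) (Set.uIcc a b))
    (hx : ∀ i ∈ S, IntervalIntegrable (x i) volume a b) :
    IntervalIntegrable (fun t ↦ ∑ i ∈ S, w i t * x i t) volume a b := by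
  simpa only [Finset.sum_fn] using
    IntervalIntegrable.sum S fun i hi ↦ (hx i hi).continuousOn_mul (hw i hi)

lemma IsPricingEq.intervalIntegrable_flow {N : ℕ} {T : ℝ} {μ Q c : ℕ → ℝ} {s : ℝ → ℝ}
    {q p : ℕ → ℝ → ℝ} {ρ : ℕ → ℝ} (hT : 0 ≤ T) (he : IsPricingEq N T μ Q c s q p ρ) {i : ℕ}
    (hi : i ∈ Finset.Icc 1 N) : IntervalIntegrable (q i) volume 0 T := by
  obtain ⟨M, hM⟩ := he.2.1 i hi
  exact intervalIntegrable_of_nonneg_of_le hT (he.1 i hi).1 (fun t ht ↦ (he.2.2.1 i hi t ht).1)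
    fun t ht ↦ (hM t ht).1

lemma IsPricingEq.intervalIntegrable_price {N : ℕ} {T : ℝ} {μ Q c : ℕ → ℝ} {s : ℝ → ℝ}
    {q p : ℕ → ℝ → ℝ} {ρ : ℕ → ℝ} (hT : 0 ≤ T) (he : IsPricingEq N T μ Q c s q p ρ) {i : ℕ}
    (hi : i ∈ Finset.Icc 1 N) : IntervalIntegrable (p i) volume 0 T := by
  obtain ⟨M, hM⟩ := he.2.1 i hi
  exact intervalIntegrable_of_nonneg_of_le hT (he.1 i hi).2 (fun t ht ↦ (he.2.2.1 i hi t ht).2)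
    fun t ht ↦ (hM t ht).2

lemma FeasibleFlow.intervalIntegrable {N : ℕ} {T : ℝ} {μ Q : ℕ → ℝ} {r : ℕ → ℝ → ℝ}
    (hT : 0 ≤ T) (hr : FeasibleFlow N T μ Q r) {i : ℕ} (hi : i ∈ Finset.Icc 1 N) :
    IntervalIntegrable (r i) volume 0 T := by
  obtain ⟨M, hM⟩ := hr.2.1 i hi
  exact intervalIntegrable_of_nonneg_of_le hT (hr.1 i hi) (hr.2.2.1 i hi) hM

lemma integral_dual {N : ℕ} {T : ℝ} {μ Q ρ : ℕ → ℝ} {p x : ℕ → ℝ → ℝ}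
    (hp : ∀ i ∈ Finset.Icc 1 N, IntervalIntegrable (p i) volume 0 T)
    (hx : ∀ i ∈ Finset.Icc 1 N, IntervalIntegrable (x i) volume 0 T)
    (hxQ : ∀ i ∈ Finset.Icc 1 N, ∫ t in (0:ℝ)..T, x i t = Q i) :
    ∫ t in (0:ℝ)..T, (∑ i ∈ Finset.Icc 1 N, ρ i * x i t - ∑ i ∈ Finset.Icc 1 N, μ i * p i t) =
      ∑ i ∈ Finset.Icc 1 N, ρ i * Q i - ∑ i ∈ Finset.Icc 1 N, μ i * ∫ t in (0:ℝ)..T, p i t := by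
  rw [intervalIntegral.integral_sub
      (intervalIntegrable_sum_mul _ (fun _ _ ↦ continuousOn_const) hx)
      (intervalIntegrable_sum_mul _ (fun _ _ ↦ continuousOn_const) hp),
    intervalIntegral.integral_finsetSum fun i hi ↦ (hx i hi).const_mul _,
    intervalIntegral.integral_finsetSum fun i hi ↦ (hp i hi).const_mul _]
  simp only [intervalIntegral.integral_const_mul]
  rw [Finset.sum_congr rfl fun i hi ↦ by rw [hxQ i hi]]

theorem IsPricingEq.sum_integral_le {N : ℕ} {T : ℝ} {μ Q c : ℕ → ℝ} {s : ℝ → ℝ}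
    {q p r : ℕ → ℝ → ℝ} {ρ : ℕ → ℝ} (hT : 0 ≤ T) (hs : ContinuousOn s (Set.Icc 0 T))
    (he : IsPricingEq N T μ Q c s q p ρ) (hr : FeasibleFlow N T μ Q r) :
    ∑ i ∈ Finset.Icc 1 N, ∫ t in (0:ℝ)..T, (s t + c i) * q i t ≤
      ∑ i ∈ Finset.Icc 1 N, ∫ t in (0:ℝ)..T, (s t + c i) * r i t := by
  have hq_ii := fun i (hi : i ∈ Finset.Icc 1 N) ↦ he.intervalIntegrable_flow hT hi
  have hp_ii := fun i (hi : i ∈ Finset.Icc 1 N) ↦ he.intervalIntegrable_price hT hi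
  have hr_ii := fun i (hi : i ∈ Finset.Icc 1 N) ↦ hr.intervalIntegrable hT hi
  have hsc : ∀ i ∈ Finset.Icc 1 N, ContinuousOn (fun t ↦ s t + c i) (Set.uIcc 0 T) :=
    fun i _ ↦ by rw [Set.uIcc_of_le hT]; exact hs.add continuousOn_const
  obtain ⟨-, -, hqp_nonneg, hE1, hE2, hE3⟩ := he
  rw [← intervalIntegral.integral_finsetSum fun i hi ↦ (hq_ii i hi).continuousOn_mul (hsc i hi),
    ← intervalIntegral.integral_finsetSum fun i hi ↦ (hr_ii i hi).continuousOn_mul (hsc i hi)]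
  calc ∫ t in (0:ℝ)..T, ∑ i ∈ Finset.Icc 1 N, (s t + c i) * q i t
      = ∫ t in (0:ℝ)..T, (∑ i ∈ Finset.Icc 1 N, ρ i * q i t
          - ∑ i ∈ Finset.Icc 1 N, μ i * p i t) := by
        refine intervalIntegral.integral_congr fun t ht ↦ ?_
        rw [Set.uIcc_of_le hT] at ht
        exact (dual_eq_sum_mul (fun i hi ↦ (hqp_nonneg i hi t ht).2)
          (fun i hi ↦ (hqp_nonneg i hi t ht).1) (fun i hi ↦ ((hE1 i hi t ht).2 ·))
          (fun i hi ↦ ((hE2 i hi t ht).2 ·))).symm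
    _ = ∫ t in (0:ℝ)..T, (∑ i ∈ Finset.Icc 1 N, ρ i * r i t
          - ∑ i ∈ Finset.Icc 1 N, μ i * p i t) := by
        rw [integral_dual hp_ii hq_ii hE3, integral_dual hp_ii hr_ii hr.2.2.2.2]
    _ ≤ ∫ t in (0:ℝ)..T, ∑ i ∈ Finset.Icc 1 N, (s t + c i) * r i t :=
        intervalIntegral.integral_mono_on hT
          ((intervalIntegrable_sum_mul _ (fun _ _ ↦ continuousOn_const) hr_ii).sub
            (intervalIntegrable_sum_mul _ (fun _ _ ↦ continuousOn_const) hp_ii))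
          (intervalIntegrable_sum_mul _ hsc hr_ii) fun t ht ↦
          dual_le_sum_mul (fun i hi ↦ (hqp_nonneg i hi t ht).2) (fun i hi ↦ hr.2.2.1 i hi t ht)
            (fun i hi ↦ (hE1 i hi t ht).1) (fun i hi ↦ hr.2.2.2.1 i hi t ht)

variable {N : ℕ} {T td : ℝ} {μ Q c : ℕ → ℝ} {s : ℝ → ℝ} {tm tp : ℕ → ℝ}
  {q p : ℕ → ℝ → ℝ} {ρ : ℕ → ℝ} {i j : ℕ} {t : ℝ}

namespace CorridorNet

lemma strictlyQuasiconvexOn (hnet : CorridorNet N T td μ Q c s) :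
    StrictlyQuasiconvexOn (Set.Icc 0 T) s :=
  hnet.2.2.2.2.2.2.2

lemma demand_pos (hnet : CorridorNet N T td μ Q c s) (hi : i ∈ Finset.Icc 1 N) : 0 < Q i :=
  (hnet.2.2.2.1 i hi).2.1

lemma continuousOn (hnet : CorridorNet N T td μ Q c s) : ContinuousOn s (Set.Icc 0 T) :=
  hnet.2.2.2.2.1

lemma rushHour_pos (hnet : CorridorNet N T td μ Q c s) : 0 < T :=
  hnet.2.1

lemma nonneg (hnet : CorridorNet N T td μ Q c s) (ht : t ∈ Set.Icc 0 T) : 0 ≤ s t :=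
  hnet.2.2.2.2.2.1 t ht

end CorridorNet

namespace ReducedNet

lemma muhat_pos (hred : ReducedNet N T μ Q s tm tp) (hi : i ∈ Finset.Icc 1 N) :
    0 < muhat N μ i := by
  obtain ⟨hi1, -⟩ := Finset.mem_Icc.1 hi
  unfold muhat
  split_ifs with hiN
  · linarith [hred.1 i hi1 hiN]
  · exact hred.2.1

lemma window_length (hred : ReducedNet N T μ Q s tm tp) (hi : i ∈ Finset.Icc 1 N) :
    tp i - tm i = Q i / muhat N μ i :=
  (hred.2.2.2 i hi).2.2.1

lemma level_eq (hred : ReducedNet N T μ Q s tm tp) (hi : i ∈ Finset.Icc 1 N) :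
    s (tm i) = s (tp i) :=
  (hred.2.2.2 i hi).2.2.2

lemma tm_lt_tp (hred : ReducedNet N T μ Q s tm tp) (hQ : 0 < Q i) (hi : i ∈ Finset.Icc 1 N) :
    tm i < tp i := by
  have := hred.window_length hi
  have := div_pos hQ (hred.muhat_pos hi)
  linarith

lemma window_subset (hred : ReducedNet N T μ Q s tm tp) (hi : i ∈ Finset.Icc 1 N) :
    Set.Icc (tm i) (tp i) ⊆ Set.Icc 0 T :=
  Set.Icc_subset_Icc (hred.2.2.2 i hi).1.le (hred.2.2.2 i hi).2.1.le

lemma tm_mem (hred : ReducedNet N T μ Q s tm tp) (hQ : 0 < Q i) (hi : i ∈ Finset.Icc 1 N) :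
    tm i ∈ Set.Icc 0 T :=
  hred.window_subset hi (Set.left_mem_Icc.2 (hred.tm_lt_tp hQ hi).le)

lemma tp_mem (hred : ReducedNet N T μ Q s tm tp) (hQ : 0 < Q i) (hi : i ∈ Finset.Icc 1 N) :
    tp i ∈ Set.Icc 0 T :=
  hred.window_subset hi (Set.right_mem_Icc.2 (hred.tm_lt_tp hQ hi).le)

lemma mem_window_iff (hred : ReducedNet N T μ Q s tm tp)
    (hs : StrictlyQuasiconvexOn (Set.Icc 0 T) s) (hQ : 0 < Q i) (hi : i ∈ Finset.Icc 1 N)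
    (ht : t ∈ Set.Icc 0 T) :
    t ∈ Set.Icc (tm i) (tp i) ↔ s t ≤ s (tm i) :=
  hs.mem_Icc_iff (hred.tm_mem hQ hi) (hred.tp_mem hQ hi) ht (hred.tm_lt_tp hQ hi)
    (hred.level_eq hi)

lemma window_subset_succ (hred : ReducedNet N T μ Q s tm tp)
    (hs : StrictlyQuasiconvexOn (Set.Icc 0 T) s) (hQ : ∀ i ∈ Finset.Icc 1 N, 0 < Q i)
    (hi1 : 1 ≤ i) (hiN : i < N) :
    Set.Icc (tm i) (tp i) ⊆ Set.Icc (tm (i + 1)) (tp (i + 1)) := by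
  have hi : i ∈ Finset.Icc 1 N := Finset.mem_Icc.2 ⟨hi1, hiN.le⟩
  have hi' : i + 1 ∈ Finset.Icc 1 N := Finset.mem_Icc.2 ⟨by omega, hiN⟩
  refine hs.Icc_subset_Icc_of_sub_lt (hred.tm_mem (hQ i hi) hi) (hred.tp_mem (hQ i hi) hi)
    (hred.tm_mem (hQ _ hi') hi') (hred.tp_mem (hQ _ hi') hi') (hred.tm_lt_tp (hQ i hi) hi)
    (hred.level_eq hi) (hred.level_eq hi') ?_
  rw [hred.window_length hi, hred.window_length hi']
  exact hred.2.2.1 i hi1 hiN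

lemma window_mono (hred : ReducedNet N T μ Q s tm tp)
    (hs : StrictlyQuasiconvexOn (Set.Icc 0 T) s) (hQ : ∀ i ∈ Finset.Icc 1 N, 0 < Q i)
    (hi1 : 1 ≤ i) (hij : i ≤ j) (hjN : j ≤ N) :
    Set.Icc (tm i) (tp i) ⊆ Set.Icc (tm j) (tp j) := by
  induction j, hij using Nat.le_induction with
  | base => rfl
  | succ j hij ih => exact (ih (by omega)).trans (hred.window_subset_succ hs hQ (by omega) hjN)

lemma level_mono (hred : ReducedNet N T μ Q s tm tp)
    (hs : StrictlyQuasiconvexOn (Set.Icc 0 T) s) (hQ : ∀ i ∈ Finset.Icc 1 N, 0 < Q i)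
    (hi1 : 1 ≤ i) (hij : i ≤ j) (hjN : j ≤ N) : s (tm i) ≤ s (tm j) := by
  have hi : i ∈ Finset.Icc 1 N := Finset.mem_Icc.2 ⟨hi1, hij.trans hjN⟩
  have hj : j ∈ Finset.Icc 1 N := Finset.mem_Icc.2 ⟨hi1.trans hij, hjN⟩
  exact (hred.mem_window_iff hs (hQ j hj) hj (hred.tm_mem (hQ i hi) hi)).1
    (hred.window_mono hs hQ hi1 hij hjN (Set.left_mem_Icc.2 (hred.tm_lt_tp (hQ i hi) hi).le))

end ReducedNet

namespace ExplicitDSO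

lemma sum_price_eq_indicator (hdso : ExplicitDSO N μ c s tm tp q p ρ)
    (hnest : ∀ i, 1 ≤ i → i < N → Set.Icc (tm i) (tp i) ⊆ Set.Icc (tm (i + 1)) (tp (i + 1)))
    (hi1 : 1 ≤ i) (hiN : i ≤ N) (t : ℝ) :
    ∑ j ∈ Finset.Icc 1 i, p j t =
      (Set.Icc (tm i) (tp i)).indicator (fun t ↦ s (tm i) - s t) t := by
  induction i, hi1 using Nat.le_induction with
  | base =>
    have h1 : 1 ∈ Finset.Icc 1 N := Finset.mem_Icc.2 ⟨le_rfl, hiN⟩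
    rw [Finset.Icc_self, Finset.sum_singleton, hdso.2.2 1 h1 t, hdso.2.1 1 h1, Set.indicator_apply,
      Nat.sub_self, Finset.Icc_eq_empty_of_lt zero_lt_one, Finset.sum_empty]
    split_ifs <;> ring
  | succ i hi1 ih =>
    have hi : i + 1 ∈ Finset.Icc 1 N := Finset.mem_Icc.2 ⟨by omega, hiN⟩
    rw [Finset.sum_Icc_succ_top (by omega), hdso.2.2 (i + 1) hi t, hdso.2.1 (i + 1) hi,
      Nat.add_sub_cancel, ih (by omega)]
    by_cases ht : t ∈ Set.Icc (tm (i + 1)) (tp (i + 1))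
    · rw [if_pos ht, Set.indicator_of_mem ht]
      ring
    · rw [if_neg ht, Set.indicator_of_notMem ht,
        Set.indicator_of_notMem fun h ↦ ht (hnest i hi1 (by omega) h), add_zero]

lemma sum_price_eq_max (hnet : CorridorNet N T td μ Q c s) (hred : ReducedNet N T μ Q s tm tp)
    (hdso : ExplicitDSO N μ c s tm tp q p ρ) (hi : i ∈ Finset.Icc 1 N) (ht : t ∈ Set.Icc 0 T) :
    ∑ j ∈ Finset.Icc 1 i, p j t = max (s (tm i) - s t) 0 := by
  have hs := hnet.strictlyQuasiconvexOn
  have hwin := hred.mem_window_iff hs (hnet.demand_pos hi) hi ht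
  obtain ⟨hi1, hiN⟩ := Finset.mem_Icc.1 hi
  rw [hdso.sum_price_eq_indicator (fun _ ↦ hred.window_subset_succ hs fun _ ↦ hnet.demand_pos)
    hi1 hiN t, Set.indicator_apply]
  split_ifs with h
  · rw [max_eq_left (sub_nonneg.2 (hwin.1 h))]
  · rw [max_eq_right (sub_nonpos.2 (not_le.1 (hwin.not.1 h)).le)]

lemma price_nonneg (hnet : CorridorNet N T td μ Q c s) (hred : ReducedNet N T μ Q s tm tp)
    (hdso : ExplicitDSO N μ c s tm tp q p ρ) (hi : i ∈ Finset.Icc 1 N) (ht : t ∈ Set.Icc 0 T) :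
    0 ≤ p i t := by
  obtain ⟨hi1, hiN⟩ := Finset.mem_Icc.1 hi
  rw [← sub_sum_Icc_one_pred (p · t) hi1, sub_nonneg, hdso.sum_price_eq_max hnet hred hi ht]
  rcases hi1.eq_or_lt with rfl | hi2
  · simp
  · rw [hdso.sum_price_eq_max hnet hred (Finset.mem_Icc.2 ⟨by omega, by omega⟩) ht]
    have := hred.level_mono hnet.strictlyQuasiconvexOn (fun _ ↦ hnet.demand_pos)
      (by omega : 1 ≤ i - 1) (Nat.sub_le i 1) hiN
    exact max_le_max (by linarith) le_rfl

lemma price_le (hnet : CorridorNet N T td μ Q c s) (hred : ReducedNet N T μ Q s tm tp)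
    (hdso : ExplicitDSO N μ c s tm tp q p ρ) (hi : i ∈ Finset.Icc 1 N) (ht : t ∈ Set.Icc 0 T) :
    p i t ≤ s (tm i) := by
  obtain ⟨hi1, hiN⟩ := Finset.mem_Icc.1 hi
  have hprev : 0 ≤ ∑ j ∈ Finset.Icc 1 (i - 1), p j t := Finset.sum_nonneg fun _ hj ↦
    hdso.price_nonneg hnet hred (Finset.Icc_subset_Icc_right ((Nat.sub_le i 1).trans hiN) hj) ht
  have hst := hnet.nonneg ht
  have hsm := hnet.nonneg (hred.tm_mem (hnet.demand_pos hi) hi)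
  rw [← sub_sum_Icc_one_pred (p · t) hi1, hdso.sum_price_eq_max hnet hred hi ht]
  calc max (s (tm i) - s t) 0 - ∑ j ∈ Finset.Icc 1 (i - 1), p j t ≤ max (s (tm i) - s t) 0 :=
        sub_le_self _ hprev
    _ ≤ s (tm i) := max_le (by linarith) hsm

lemma measurable_price (hnet : CorridorNet N T td μ Q c s) (hred : ReducedNet N T μ Q s tm tp)
    (hdso : ExplicitDSO N μ c s tm tp q p ρ) (hi : i ∈ Finset.Icc 1 N) : Measurable (p i) := by
  obtain ⟨hi1, hiN⟩ := Finset.mem_Icc.1 hi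
  have hP : ∀ k ≤ N, Measurable fun t ↦ ∑ j ∈ Finset.Icc 1 k, p j t := by
    intro k hkN
    rcases Nat.eq_zero_or_pos k with rfl | hk1
    · simp only [Finset.Icc_eq_empty_of_lt zero_lt_one, Finset.sum_empty]
      exact measurable_const
    have hk : k ∈ Finset.Icc 1 N := Finset.mem_Icc.2 ⟨hk1, hkN⟩
    simp only [hdso.sum_price_eq_indicator (fun _ ↦ hred.window_subset_succ
      hnet.strictlyQuasiconvexOn fun _ ↦ hnet.demand_pos) hk1 hkN, ← Set.piecewise_eq_indicator]
    exact ContinuousOn.measurable_piecewise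
      (continuousOn_const.sub (hnet.continuousOn.mono (hred.window_subset hk)))
      continuousOn_const measurableSet_Icc
  rw [show p i = fun t ↦ ∑ j ∈ Finset.Icc 1 i, p j t - ∑ j ∈ Finset.Icc 1 (i - 1), p j t from
    funext fun t ↦ (sub_sum_Icc_one_pred (p · t) hi1).symm]
  exact (hP i hiN).sub (hP (i - 1) (by omega))

lemma flow_eq_indicator (hdso : ExplicitDSO N μ c s tm tp q p ρ) (hi : i ∈ Finset.Icc 1 N) :
    q i = (Set.Icc (tm i) (tp i)).indicator fun _ ↦ muhat N μ i :=
  funext fun t ↦ by rw [hdso.1 i hi t, Set.indicator_apply]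

lemma flow_nonneg (hred : ReducedNet N T μ Q s tm tp) (hdso : ExplicitDSO N μ c s tm tp q p ρ)
    (hi : i ∈ Finset.Icc 1 N) (t : ℝ) : 0 ≤ q i t := by
  rw [hdso.flow_eq_indicator hi]
  exact Set.indicator_nonneg (fun _ _ ↦ (hred.muhat_pos hi).le) t

lemma flow_le (hred : ReducedNet N T μ Q s tm tp) (hdso : ExplicitDSO N μ c s tm tp q p ρ)
    (hi : i ∈ Finset.Icc 1 N) (t : ℝ) : q i t ≤ muhat N μ i := by
  rw [hdso.flow_eq_indicator hi]
  exact Set.indicator_le_self' (fun _ _ ↦ (hred.muhat_pos hi).le) t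

lemma sum_flow_le (hred : ReducedNet N T μ Q s tm tp) (hdso : ExplicitDSO N μ c s tm tp q p ρ)
    (hi : i ∈ Finset.Icc 1 N) (t : ℝ) : ∑ j ∈ Finset.Icc i N, q j t ≤ μ i := by
  obtain ⟨hi1, hiN⟩ := Finset.mem_Icc.1 hi
  rw [← sum_Icc_muhat μ hiN]
  exact Finset.sum_le_sum fun j hj ↦ hdso.flow_le hred (Finset.mem_Icc.2
    ⟨hi1.trans (Finset.mem_Icc.1 hj).1, (Finset.mem_Icc.1 hj).2⟩) t

lemma sum_flow_eq (hnet : CorridorNet N T td μ Q c s) (hred : ReducedNet N T μ Q s tm tp)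
    (hdso : ExplicitDSO N μ c s tm tp q p ρ) (hi : i ∈ Finset.Icc 1 N)
    (ht : t ∈ Set.Icc (tm i) (tp i)) : ∑ j ∈ Finset.Icc i N, q j t = μ i := by
  obtain ⟨hi1, hiN⟩ := Finset.mem_Icc.1 hi
  rw [← sum_Icc_muhat μ hiN]
  refine Finset.sum_congr rfl fun j hj ↦ ?_
  obtain ⟨hij, hjN⟩ := Finset.mem_Icc.1 hj
  rw [hdso.flow_eq_indicator (Finset.mem_Icc.2 ⟨hi1.trans hij, hjN⟩), Set.indicator_of_mem
    (hred.window_mono hnet.strictlyQuasiconvexOn (fun _ ↦ hnet.demand_pos) hi1 hij hjN ht)]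

lemma integral_flow (hnet : CorridorNet N T td μ Q c s) (hred : ReducedNet N T μ Q s tm tp)
    (hdso : ExplicitDSO N μ c s tm tp q p ρ) (hi : i ∈ Finset.Icc 1 N) :
    ∫ t in (0:ℝ)..T, q i t = Q i := by
  obtain ⟨htm, htp, -⟩ := hred.2.2.2 i hi
  have hsub : Set.Icc (tm i) (tp i) ⊆ Set.Ioc 0 T :=
    fun t ht ↦ ⟨htm.trans_le ht.1, ht.2.trans htp.le⟩
  rw [hdso.flow_eq_indicator hi, intervalIntegral.integral_of_le hnet.rushHour_pos.le,
    setIntegral_indicator measurableSet_Icc, Set.inter_eq_self_of_subset_right hsub,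
    setIntegral_const, Real.volume_real_Icc_of_le (hred.tm_lt_tp (hnet.demand_pos hi) hi).le,
    smul_eq_mul, hred.window_length hi, div_mul_cancel₀ _ (hred.muhat_pos hi).ne']

lemma le_cost_add_sum_price (hnet : CorridorNet N T td μ Q c s) (hred : ReducedNet N T μ Q s tm tp)
    (hdso : ExplicitDSO N μ c s tm tp q p ρ) (hi : i ∈ Finset.Icc 1 N) (ht : t ∈ Set.Icc 0 T) :
    ρ i ≤ s t + c i + ∑ j ∈ Finset.Icc 1 i, p j t := by
  rw [hdso.2.1 i hi, hdso.sum_price_eq_max hnet hred hi ht]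
  linarith [le_max_left (s (tm i) - s t) 0]

lemma cost_add_sum_price_eq (hnet : CorridorNet N T td μ Q c s)
    (hred : ReducedNet N T μ Q s tm tp) (hdso : ExplicitDSO N μ c s tm tp q p ρ)
    (hi : i ∈ Finset.Icc 1 N) (ht : t ∈ Set.Icc (tm i) (tp i)) :
    s t + c i + ∑ j ∈ Finset.Icc 1 i, p j t = ρ i := by
  rw [hdso.2.1 i hi, hdso.sum_price_eq_max hnet hred hi (hred.window_subset hi ht),
    max_eq_left (sub_nonneg.2 ((hred.mem_window_iff hnet.strictlyQuasiconvexOn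
      (hnet.demand_pos hi) hi (hred.window_subset hi ht)).1 ht))]
  ring

theorem isPricingEq (hnet : CorridorNet N T td μ Q c s) (hred : ReducedNet N T μ Q s tm tp)
    (hdso : ExplicitDSO N μ c s tm tp q p ρ) : IsPricingEq N T μ Q c s q p ρ := by
  refine ⟨fun i hi ↦ ⟨?_, hdso.measurable_price hnet hred hi⟩, fun i hi ↦ ?_,
    fun i hi t ht ↦ ⟨hdso.flow_nonneg hred hi t, hdso.price_nonneg hnet hred hi ht⟩,
    fun i hi t ht ↦ ⟨hdso.le_cost_add_sum_price hnet hred hi ht, fun hq ↦ ?_⟩,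
    fun i hi t _ ↦ ⟨hdso.sum_flow_le hred hi t, fun hp ↦ ?_⟩,
    fun i hi ↦ hdso.integral_flow hnet hred hi⟩
  · rw [hdso.flow_eq_indicator hi]
    exact measurable_const.indicator measurableSet_Icc
  · exact ⟨max (muhat N μ i) (s (tm i)), fun t ht ↦
      ⟨(hdso.flow_le hred hi t).trans (le_max_left _ _),
        (hdso.price_le hnet hred hi ht).trans (le_max_right _ _)⟩⟩
  · exact hdso.cost_add_sum_price_eq hnet hred hi (of_pos_of_eq_ite (hdso.1 i hi t) hq)
  · exact hdso.sum_flow_eq hnet hred hi (of_pos_of_eq_ite (hdso.2.2 i hi t) hp)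

end ExplicitDSO

/-- closed-form DSO solution, morning: the explicit collection is
nonnegatively priced, is a pricing equilibrium, and its flow pattern minimizes
the social transport cost over all feasible flow patterns. -/
theorem stmt8 (N : ℕ) (T td : ℝ) (μ Q c : ℕ → ℝ) (s : ℝ → ℝ)
    (tm tp : ℕ → ℝ) (q p : ℕ → ℝ → ℝ) (ρ : ℕ → ℝ)
    (hnet : CorridorNet N T td μ Q c s)
    (hred : ReducedNet N T μ Q s tm tp)
    (hdso : ExplicitDSO N μ c s tm tp q p ρ)
    :
    (∀ i ∈ Finset.Icc 1 N, ∀ t ∈ Set.Icc (0:ℝ) T, 0 ≤ p i t) ∧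
    IsPricingEq N T μ Q c s q p ρ ∧
    (∀ r : ℕ → ℝ → ℝ, FeasibleFlow N T μ Q r →
      (∑ i ∈ Finset.Icc 1 N, ∫ t in (0:ℝ)..T, (s t + c i) * q i t) ≤
      (∑ i ∈ Finset.Icc 1 N, ∫ t in (0:ℝ)..T, (s t + c i) * r i t)) := by
  have heq := hdso.isPricingEq hnet hred
  exact ⟨fun i hi t ht ↦ hdso.price_nonneg hnet hred hi ht, heq,
    fun r hr ↦ heq.sum_integral_le hnet.rushHour_pos.le hnet.continuousOn hr⟩
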